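/- arXiv:1307.7825 — 3 statements merged into one kernel-verified Lean document; each statement's English description precedes it below -/
import Mathlib

section
/- The number of isomorphism classes of tripartite graphs on three partite sets of two vertices each, where edges join only vertices from different partite sets and the edge relation encodes equality in a system of three pairs of elements from a common set with both elements in each pair distinct (i.e., graphs realizable as the 'similarity graph' G[u,v,x,y,c,d] of three unordered pairs {u,v},{x,y},{c,d} of distinct elements), is exactly 8. -/
open Finset

/-- The partite block (`i/2`) of a vertex of the `3 × 2` tripartite similarity graph. -/
def blk (i : Fin 6) : Fin 3 := ⟨i.val / 2, by omega⟩

/-- A graph on six vertices (two per pair) is *realizable* as the similarity graph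
`G[u,v,x,y,c,d]` of three unordered pairs of distinct elements: there is a labelling
`t` of the six vertices with the two labels in each pair distinct, and an edge joins
two vertices iff they lie in different pairs and carry equal labels. -/
def Realizable (G : Fin 6 → Fin 6 → Bool) : Prop :=
  ∃ t : Fin 6 → Fin 6, t 0 ≠ t 1 ∧ t 2 ≠ t 3 ∧ t 4 ≠ t 5 ∧
    ∀ i j, G i j = decide (blk i ≠ blk j ∧ t i = t j)

/-- Two realizable similarity graphs are isomorphic when some permutation of the six
vertices preserving the pair-block structure carries one to the other. -/
def SimIso (G₁ G₂ : Fin 6 → Fin 6 → Bool) : Prop :=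
  ∃ π : Equiv.Perm (Fin 6),
    (∀ i j, blk i = blk j ↔ blk (π i) = blk (π j)) ∧
    ∀ i j, G₂ i j = G₁ (π i) (π j)

/-!
A realizable graph records only which of the six labels coincide, so it is determined by its
labelling up to renaming; naming each label by the least index carrying it leaves 87 labellings
`![0, 1, c, d, e, f]`. A block-preserving permutation is determined by the images of `0`, `2`, `4`,
which turns isomorphism into a finite search: each of the 87 labellings is isomorphic to one of
eight representatives, and these are pairwise non-isomorphic.
-/

theorem Equivalence.exists_surjective_iff_of_transversal {α ι : Type*} {r : α → α → Prop}
    (hr : Equivalence r) (rep : ι → α) (hcover : ∀ x, ∃ k, r x (rep k))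
    (hsep : ∀ k l, r (rep k) (rep l) → k = l) :
    ∃ f : α → ι, Function.Surjective f ∧ ∀ x y, f x = f y ↔ r x y := by
  choose f hf using hcover
  refine ⟨f, fun k => ⟨rep k, hsep _ _ (hr.symm (hf (rep k)))⟩, fun x y => ⟨fun hxy => ?_, ?_⟩⟩
  · exact hr.trans (hf x) (hxy ▸ hr.symm (hf y))
  · exact fun hxy => hsep _ _ (hr.trans (hr.symm (hf x)) (hr.trans hxy (hf y)))

section minLabel

variable {n : ℕ} {α : Type*} [DecidableEq α] (t : Fin n → α)

def minLabel (i : Fin n) : Fin n :=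
  (univ.filter fun j => t j = t i).min' ⟨i, by simp⟩

theorem apply_minLabel (i : Fin n) : t (minLabel t i) = t i :=
  (mem_filter.1 (min'_mem (univ.filter fun j => t j = t i) _)).2

theorem minLabel_le {i j : Fin n} (h : t j = t i) : minLabel t i ≤ j :=
  min'_le _ _ (by simp [h])

theorem minLabel_eq_minLabel_iff (i j : Fin n) : minLabel t i = minLabel t j ↔ t i = t j := by
  refine ⟨fun h => by rw [← apply_minLabel t i, h, apply_minLabel t j], fun h => ?_⟩
  exact le_antisymm (minLabel_le t ((apply_minLabel t j).trans h.symm))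
    (minLabel_le t ((apply_minLabel t i).trans h))

end minLabel

def IsMinLabelling {n : ℕ} (s : Fin n → Fin n) : Prop :=
  ∀ i, s (s i) = s i ∧ ∀ j, s j = s i → s i ≤ j

instance {n : ℕ} (s : Fin n → Fin n) : Decidable (IsMinLabelling s) :=
  inferInstanceAs (Decidable (∀ _, _ ∧ _))

theorem isMinLabelling_minLabel {n : ℕ} {α : Type*} [DecidableEq α] (t : Fin n → α) :
    IsMinLabelling (minLabel t) := fun i =>
  ⟨(minLabel_eq_minLabel_iff t _ _).2 (apply_minLabel t i),
    fun j h => minLabel_le t ((minLabel_eq_minLabel_iff t j i).1 h)⟩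

def simGraph {α : Type*} [DecidableEq α] (t : Fin 6 → α) (i j : Fin 6) : Bool :=
  decide (blk i ≠ blk j ∧ t i = t j)

theorem simGraph_congr {α β : Type*} [DecidableEq α] [DecidableEq β] {s : Fin 6 → α}
    {t : Fin 6 → β} (h : ∀ i j, s i = s j ↔ t i = t j) : simGraph s = simGraph t := by
  funext i j
  simp only [simGraph, h]

theorem simGraph_minLabel {α : Type*} [DecidableEq α] (t : Fin 6 → α) :
    simGraph (minLabel t) = simGraph t :=
  simGraph_congr (minLabel_eq_minLabel_iff t)

theorem SimIso.refl (G : Fin 6 → Fin 6 → Bool) : SimIso G G :=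
  ⟨Equiv.refl _, fun _ _ => Iff.rfl, fun _ _ => rfl⟩

theorem SimIso.symm {G H : Fin 6 → Fin 6 → Bool} (h : SimIso G H) : SimIso H G := by
  obtain ⟨π, hb, he⟩ := h
  refine ⟨π.symm, fun i j => ?_, fun i j => ?_⟩
  · simpa using (hb (π.symm i) (π.symm j)).symm
  · simpa using (he (π.symm i) (π.symm j)).symm

theorem SimIso.trans {G H K : Fin 6 → Fin 6 → Bool} (h : SimIso G H) (h' : SimIso H K) :
    SimIso G K := by
  obtain ⟨π, hb, he⟩ := h
  obtain ⟨σ, hb', he'⟩ := h'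
  exact ⟨σ.trans π, fun i j => (hb' i j).trans (hb (σ i) (σ j)),
    fun i j => (he' i j).trans (he (σ i) (σ j))⟩

theorem simIso_equivalence : Equivalence SimIso :=
  ⟨SimIso.refl, SimIso.symm, SimIso.trans⟩

def mate : Fin 6 → Fin 6 := ![1, 0, 3, 2, 5, 4]

def blockMap (a b c : Fin 6) : Fin 6 → Fin 6 := ![a, mate a, b, mate b, c, mate c]

def IsoVia (G H : Fin 6 → Fin 6 → Bool) (a b c : Fin 6) : Prop :=
  (blk a ≠ blk b ∧ blk a ≠ blk c ∧ blk b ≠ blk c) ∧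
    ∀ i j, H i j = G (blockMap a b c i) (blockMap a b c j)

instance (G H : Fin 6 → Fin 6 → Bool) (a b c : Fin 6) : Decidable (IsoVia G H a b c) :=
  inferInstanceAs (Decidable (_ ∧ _))

theorem eq_mate_of_blk_eq {x y : Fin 6} : blk x = blk y → x ≠ y → y = mate x := by
  revert x y
  decide +kernel

theorem eq_blockMap_of_blk_iff {π : Equiv.Perm (Fin 6)}
    (hπ : ∀ i j, blk i = blk j ↔ blk (π i) = blk (π j)) : ⇑π = blockMap (π 0) (π 2) (π 4) := by
  have hmate : ∀ i j, blk i = blk j → i ≠ j → π j = mate (π i) := fun i j hb hne =>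
    eq_mate_of_blk_eq ((hπ i j).1 hb) (π.injective.ne hne)
  funext i
  fin_cases i
  · rfl
  · exact hmate 0 1 rfl (by decide)
  · rfl
  · exact hmate 2 3 rfl (by decide)
  · rfl
  · exact hmate 4 5 rfl (by decide)

theorem blockMap_injective_and_blk_iff : ∀ a b c : Fin 6,
    blk a ≠ blk b → blk a ≠ blk c → blk b ≠ blk c →
    Function.Injective (blockMap a b c) ∧
      ∀ i j, blk i = blk j ↔ blk (blockMap a b c i) = blk (blockMap a b c j) := by
  unfold Function.Injective
  decide +kernel

theorem simIso_iff_exists_isoVia (G H : Fin 6 → Fin 6 → Bool) :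
    SimIso G H ↔ ∃ a b c, IsoVia G H a b c := by
  constructor
  · rintro ⟨π, hπ, hGH⟩
    refine ⟨π 0, π 2, π 4, ⟨?_, ?_, ?_⟩, by simpa only [← eq_blockMap_of_blk_iff hπ] using hGH⟩ <;>
      exact fun h => absurd ((hπ _ _).2 h) (by decide)
  · rintro ⟨a, b, c, ⟨hab, hac, hbc⟩, hGH⟩
    obtain ⟨hinj, hblk⟩ := blockMap_injective_and_blk_iff a b c hab hac hbc
    exact ⟨Equiv.ofBijective _ hinj.bijective_of_finite, hblk, hGH⟩

-- Ordered by the number θ of distinct labels: 2, 3, 3, 4, 4, 4, 5, 6.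
def repLabel : Fin 8 → Fin 6 → Fin 6 :=
  ![![0, 1, 1, 0, 1, 0], ![0, 1, 2, 1, 2, 1], ![0, 1, 2, 1, 2, 0], ![0, 1, 2, 1, 3, 1],
    ![0, 1, 2, 3, 3, 2], ![0, 1, 2, 3, 3, 1], ![0, 1, 2, 3, 4, 3], ![0, 1, 2, 3, 4, 5]]

theorem realizable_simGraph_repLabel (k : Fin 8) : Realizable (simGraph (repLabel k)) := by
  refine ⟨repLabel k, ?_, ?_, ?_, fun _ _ => rfl⟩ <;> revert k <;> decide +kernel

theorem eq_of_isoVia_repLabel : ∀ k l : Fin 8, ∀ a b c : Fin 6,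
    IsoVia (simGraph (repLabel k)) (simGraph (repLabel l)) a b c → k = l := by
  decide +kernel

theorem exists_isoVia_repLabel : ∀ c d e f : Fin 6, IsMinLabelling ![0, 1, c, d, e, f] →
    c ≠ d → e ≠ f → ∃ a b c' : Fin 6, ∃ k : Fin 8,
      IsoVia (simGraph ![0, 1, c, d, e, f]) (simGraph (repLabel k)) a b c' := by
  decide +kernel

theorem Realizable.exists_simIso_repLabel {G : Fin 6 → Fin 6 → Bool} (hG : Realizable G) :
    ∃ k, SimIso G (simGraph (repLabel k)) := by
  obtain ⟨t, h01, h23, h45, hG⟩ := hG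
  set s := minLabel t
  have hkey : ∀ i j, s i = s j ↔ t i = t j := minLabel_eq_minLabel_iff t
  have hs0 : s 0 = 0 := le_antisymm (minLabel_le t rfl) (Fin.zero_le _)
  have hs1 : s 1 = 1 := by
    have : s 1 ≠ 0 := fun h => h01 ((hkey 0 1).1 (hs0.trans h.symm))
    have : s 1 ≤ 1 := minLabel_le t rfl
    omega
  have hs : s = ![0, 1, s 2, s 3, s 4, s 5] := by
    funext i
    fin_cases i <;> simp [hs0, hs1]
  have hmin : IsMinLabelling ![0, 1, s 2, s 3, s 4, s 5] := hs ▸ isMinLabelling_minLabel t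
  obtain ⟨a, b, c, k, hiso⟩ := exists_isoVia_repLabel _ _ _ _ hmin
    (fun h => h23 ((hkey 2 3).1 h)) (fun h => h45 ((hkey 4 5).1 h))
  refine ⟨k, (simIso_iff_exists_isoVia _ _).2 ⟨a, b, c, ?_⟩⟩
  rw [show G = simGraph t from funext₂ hG, ← simGraph_minLabel]
  rwa [← hs] at hiso

/-- There are exactly 8 isomorphism classes of realizable similarity graphs of three
unordered pairs of distinct elements. -/
theorem eight_similarity_classes :
    ∃ f : {G : Fin 6 → Fin 6 → Bool // Realizable G} → Fin 8,
      Function.Surjective f ∧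
      ∀ G₁ G₂, f G₁ = f G₂ ↔ SimIso G₁.1 G₂.1 :=
  (simIso_equivalence.comap Subtype.val).exists_surjective_iff_of_transversal
    (fun k => ⟨_, realizable_simGraph_repLabel k⟩) (fun G => G.2.exists_simIso_repLabel)
    fun k l hkl => by
      obtain ⟨a, b, c, h⟩ := (simIso_iff_exists_isoVia _ _).1 hkl
      exact eq_of_isoVia_repLabel k l a b c h
end

section
/- Let S be a finite set of size s and cost : S × S → ℝ symmetric with cost(u,u)=0. If R is a uniformly random r-element subset of S with 2 ≤ r ≤ s, then E[(∑_{{u,v}∈Δ(R)} cost(u,v))³] = ∑_{{u,v}∈Δ(S)} ∑_{{x,y}∈Δ(S)} ∑_{{c,d}∈Δ(S)} ((r)_θ/(s)_θ) · cost(u,v)·cost(x,y)·cost(c,d), where θ = θ(u,v,x,y,c,d) is the number of distinct elements among u,v,x,y,c,d (and 2 ≤ θ ≤ 6). -/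
/-!
Expanding the cube turns each summand into a six-fold sum over tuples `(u, v, x, y, c, d)` of
elements of `R`. Exchanging the order of summation, a tuple with support `T ⊆ S` is counted once
for every `r`-subset containing `T`, and there are `C(s - |T|, r - |T|)` of those; divided by
`C(s, r)` this is `(r)_|T| / (s)_|T|`, which also covers `|T| > r`, where both sides vanish.
Since `cost u u = 0`, the diagonal terms excluded by `erase` contribute nothing on either side.
-/

open Finset

theorem Nat.choose_mul_descFactorial {s r t : ℕ} (htr : t ≤ r) :
    s.choose r * r.descFactorial t = s.descFactorial t * (s - t).choose (r - t) := by
  rw [descFactorial_eq_factorial_mul_choose, descFactorial_eq_factorial_mul_choose,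
    mul_left_comm, choose_mul htr, mul_assoc]

section

variable {α : Type*} [DecidableEq α]

theorem cast_card_filter_powersetCard_subset_div_choose {S T : Finset α} {r : ℕ}
    (hTS : T ⊆ S) (hrS : r ≤ #S) :
    (#{R ∈ S.powersetCard r | T ⊆ R} : ℝ) / (#S).choose r
      = r.descFactorial #T / (#S).descFactorial #T := by
  by_cases hTr : #T ≤ r
  · have hchoose : ((#S).choose r : ℝ) ≠ 0 := by positivity [Nat.choose_pos hrS]
    have hdesc : ((#S).descFactorial #T : ℝ) ≠ 0 := by
      exact_mod_cast (Nat.descFactorial_pos.2 (card_le_card hTS)).ne'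
    rw [div_eq_div_iff hchoose hdesc, card_filter_powersetCard_subset T S r hTS hTr]
    norm_cast
    rw [mul_comm, ← Nat.choose_mul_descFactorial hTr, mul_comm]
  · have hnone : #{R ∈ S.powersetCard r | T ⊆ R} = 0 := by
      rw [card_eq_zero, filter_eq_empty_iff]
      intro R hR hTR
      exact hTr ((card_le_card hTR).trans (mem_powersetCard.1 hR).2.le)
    rw [hnone, Nat.descFactorial_eq_zero_iff_lt.2 (not_le.1 hTr)]
    simp

theorem sum_sum₆_eq_sum₆_card_filter_subset_nsmul {M : Type*} [AddCommMonoid M]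
    (P : Finset (Finset α)) (S : Finset α) (hP : ∀ R ∈ P, R ⊆ S)
    (F : α → α → α → α → α → α → M) :
    ∑ R ∈ P, ∑ u ∈ R, ∑ v ∈ R, ∑ x ∈ R, ∑ y ∈ R, ∑ c ∈ R, ∑ d ∈ R, F u v x y c d
      = ∑ u ∈ S, ∑ v ∈ S, ∑ x ∈ S, ∑ y ∈ S, ∑ c ∈ S, ∑ d ∈ S,
          #{R ∈ P | {u, v, x, y, c, d} ⊆ R} • F u v x y c d := by
  have hindicator : ∀ R ∈ P,
      ∑ u ∈ R, ∑ v ∈ R, ∑ x ∈ R, ∑ y ∈ R, ∑ c ∈ R, ∑ d ∈ R, F u v x y c d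
        = ∑ u ∈ S, ∑ v ∈ S, ∑ x ∈ S, ∑ y ∈ S, ∑ c ∈ S, ∑ d ∈ S,
            if {u, v, x, y, c, d} ⊆ R then F u v x y c d else 0 := by
    intro R hR
    simp only [insert_subset_iff, singleton_subset_iff, ite_and, sum_ite_irrel, sum_const_zero,
      sum_ite_mem, inter_eq_right.2 (hP R hR)]
  rw [sum_congr rfl hindicator]
  simp only [Finset.sum_comm (s := P)]
  simp only [sum_ite, sum_const_zero, add_zero, sum_const]

theorem sum_powersetCard_sum₆_div_choose (S : Finset α) {r : ℕ} (hrS : r ≤ #S)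
    (F : α → α → α → α → α → α → ℝ) :
    (∑ R ∈ S.powersetCard r, ∑ u ∈ R, ∑ v ∈ R, ∑ x ∈ R, ∑ y ∈ R, ∑ c ∈ R, ∑ d ∈ R,
        F u v x y c d) / (#S).choose r
      = ∑ u ∈ S, ∑ v ∈ S, ∑ x ∈ S, ∑ y ∈ S, ∑ c ∈ S, ∑ d ∈ S,
          (r.descFactorial #{u, v, x, y, c, d} / (#S).descFactorial #{u, v, x, y, c, d} : ℝ) *
            F u v x y c d := by
  rw [sum_sum₆_eq_sum₆_card_filter_subset_nsmul _ S fun R hR => (mem_powersetCard.1 hR).1]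
  simp only [sum_div, nsmul_eq_mul]
  refine sum_congr rfl fun u hu => sum_congr rfl fun v hv => sum_congr rfl fun x hx =>
    sum_congr rfl fun y hy => sum_congr rfl fun c hc => sum_congr rfl fun d hd => ?_
  rw [mul_div_right_comm, cast_card_filter_powersetCard_subset_div_choose ?_ hrS]
  simp [insert_subset_iff, *]

end

theorem expectation_cube_pair_sum_general {α : Type*} [DecidableEq α]
    (S : Finset α) (s r : ℕ) (hs : S.card = s) (cost : α → α → ℝ)
    (hdiag : ∀ u, cost u u = 0)
    (hrs : r ≤ s) :
    (∑ R ∈ S.powersetCard r, ((∑ u ∈ R, ∑ v ∈ R.erase u, cost u v) / 2) ^ 3) /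
        ((s.choose r : ℝ))
      = (1 / 8) *
        ∑ u ∈ S, ∑ v ∈ S.erase u, ∑ x ∈ S, ∑ y ∈ S.erase x, ∑ c ∈ S, ∑ d ∈ S.erase c,
          ((r.descFactorial (({u, v, x, y, c, d} : Finset α).card) : ℝ) /
              (s.descFactorial (({u, v, x, y, c, d} : Finset α).card) : ℝ)) *
            (cost u v * cost x y * cost c d) := by
  subst hs
  have hcube (R : Finset α) : (∑ u ∈ R, ∑ v ∈ R, cost u v) ^ 3
      = ∑ u ∈ R, ∑ v ∈ R, ∑ x ∈ R, ∑ y ∈ R, ∑ c ∈ R, ∑ d ∈ R,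
          cost u v * cost x y * cost c d := by
    simp only [pow_succ', pow_zero, mul_one, sum_mul]
    simp only [mul_sum, mul_assoc]
  simp (disch := simp [hdiag]) only [sum_erase]
  simp only [div_pow, hcube, ← sum_div]
  rw [div_right_comm, sum_powersetCard_sum₆_div_choose S hrs]
  ring

/-- For uniformly random `r`-subsets `R` of `S`, the expectation of the cube of
`∑_{{u,v}∈Δ(R)} cost(u,v)` equals the triple sum over ordered pairs of distinct
tips, weighted by `(r)_θ/(s)_θ` where `θ` is the number of distinct elements among
the six tips.  Unordered pair sums are written as half the ordered sums (whence the
overall factor `1/8` on the right-hand side). -/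
theorem expectation_cube_pair_sum {α : Type*} [DecidableEq α]
    (S : Finset α) (s r : ℕ) (hs : S.card = s) (cost : α → α → ℝ)
    (hsym : ∀ u v, cost u v = cost v u) (hdiag : ∀ u, cost u u = 0)
    (h2 : 2 ≤ r) (hrs : r ≤ s) :
    (∑ R ∈ S.powersetCard r, ((∑ u ∈ R, ∑ v ∈ R.erase u, cost u v) / 2) ^ 3) /
        ((s.choose r : ℝ))
      = (1 / 8) *
        ∑ u ∈ S, ∑ v ∈ S.erase u, ∑ x ∈ S, ∑ y ∈ S.erase x, ∑ c ∈ S, ∑ d ∈ S.erase c,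
          ((r.descFactorial (({u, v, x, y, c, d} : Finset α).card) : ℝ) /
              (s.descFactorial (({u, v, x, y, c, d} : Finset α).card) : ℝ)) *
            (cost u v * cost x y * cost c d) :=
  expectation_cube_pair_sum_general S s r hs cost hdiag hrs
end

section
/- Let cost : S × S → ℝ be symmetric with cost(u,u)=0 on a finite set S, TC(u) = ∑_{v∈S\{u}} cost(u,v). Then ∑_{{u,v}∈Δ(S)} cost(u,v)·(TC(u)+TC(v))·(TC(u)+TC(v)−2cost(u,v)) = ∑_{u∈S} TC(u)³ + 2·∑_{{u,v}∈Δ(S)} cost(u,v)·TC(u)·TC(v) − 2·∑_{u∈S} SQ(u)·TC(u), where SQ(u) = ∑_{v∈S\{u}} cost(u,v)². -/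
open Finset

lemma my_swap {α : Type*} [DecidableEq α] (S : Finset α) (f : α → α → ℝ) :
    ∑ u ∈ S, ∑ v ∈ S.erase u, f u v = ∑ u ∈ S, ∑ v ∈ S.erase u, f v u := by
  rw [Finset.sum_comm' (s' := fun y => S.erase y) (t' := S)
    (by intro x y; simp [Finset.mem_erase, eq_comm]; tauto)]

/-- `∑_{{u,v}∈Δ(S)} cost(u,v)·(TC(u)+TC(v))·(TC(u)+TC(v)−2cost(u,v))
  = ∑_u TC(u)³ + 2·∑_{{u,v}} cost(u,v)·TC(u)·TC(v) − 2·∑_u SQ(u)·TC(u)`. -/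
theorem class_G_piece_identity {α : Type*} [DecidableEq α]
    (S : Finset α) (cost : α → α → ℝ)
    (hsym : ∀ u v, cost u v = cost v u) (hdiag : ∀ u, cost u u = 0) :
    (∑ u ∈ S, ∑ v ∈ S.erase u, cost u v *
        ((∑ x ∈ S.erase u, cost u x) + (∑ x ∈ S.erase v, cost v x)) *
        ((∑ x ∈ S.erase u, cost u x) + (∑ x ∈ S.erase v, cost v x) - 2 * cost u v)) / 2
      = (∑ u ∈ S, (∑ v ∈ S.erase u, cost u v) ^ 3)
        + 2 * ((∑ u ∈ S, ∑ v ∈ S.erase u,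
            cost u v * (∑ x ∈ S.erase u, cost u x) * (∑ x ∈ S.erase v, cost v x)) / 2)
        - 2 * (∑ u ∈ S, (∑ v ∈ S.erase u, cost u v ^ 2) * (∑ v ∈ S.erase u, cost u v)) := by
  set T : α → ℝ := fun u => ∑ x ∈ S.erase u, cost u x with hT
  have h1 : ∑ u ∈ S, ∑ v ∈ S.erase u, cost u v * T u * T u
      = ∑ u ∈ S, (T u) ^ 3 := by
    refine Finset.sum_congr rfl fun u hu => ?_
    rw [← Finset.sum_mul, ← Finset.sum_mul]; rw [hT]; ring
  have h2 : ∑ u ∈ S, ∑ v ∈ S.erase u, cost u v * T v * T v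
      = ∑ u ∈ S, (T u) ^ 3 := by
    rw [my_swap S (fun u v => cost u v * T v * T v), ← h1]
    exact Finset.sum_congr rfl fun u hu => Finset.sum_congr rfl fun v hv => by
      rw [hsym v u]
  have h3 : ∑ u ∈ S, ∑ v ∈ S.erase u, cost u v ^ 2 * T u
      = ∑ u ∈ S, (∑ v ∈ S.erase u, cost u v ^ 2) * T u := by
    refine Finset.sum_congr rfl fun u hu => ?_
    rw [← Finset.sum_mul]
  have h4 : ∑ u ∈ S, ∑ v ∈ S.erase u, cost u v ^ 2 * T v
      = ∑ u ∈ S, (∑ v ∈ S.erase u, cost u v ^ 2) * T u := by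
    rw [my_swap S (fun u v => cost u v ^ 2 * T v), ← h3]
    exact Finset.sum_congr rfl fun u hu => Finset.sum_congr rfl fun v hv => by
      rw [hsym v u]
  have hcomb : (∑ u ∈ S, ∑ v ∈ S.erase u, cost u v * (T u + T v) * (T u + T v - 2 * cost u v))
      = (∑ u ∈ S, ∑ v ∈ S.erase u, cost u v * T u * T u)
        + 2 * (∑ u ∈ S, ∑ v ∈ S.erase u, cost u v * T u * T v)
        + (∑ u ∈ S, ∑ v ∈ S.erase u, cost u v * T v * T v)
        - 2 * (∑ u ∈ S, ∑ v ∈ S.erase u, cost u v ^ 2 * T u)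
        - 2 * (∑ u ∈ S, ∑ v ∈ S.erase u, cost u v ^ 2 * T v) := by
    simp only [Finset.mul_sum, ← Finset.sum_add_distrib, ← Finset.sum_sub_distrib]
    exact Finset.sum_congr rfl fun u hu => Finset.sum_congr rfl fun v hv => by ring
  rw [hcomb, h1, h2, h3, h4]
  ring
end
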